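/- Let n ≥ 1, S = e_1 + ⋯ + e_n ∈ Cl(n), and let M_S : Cl(n) → Cl(n) be right multiplication by S. Then Cl(n) decomposes as a direct sum of vector spaces Cl(n) = ker(M_S − √n) ⊕ ker(M_S + √n), and these eigenspaces equal the principal left ideals Cl(n)(√n + S) and Cl(n)(−√n + S) respectively. -/
import Mathlib


open scoped BigOperators

/-- `Cl n`: the real Clifford algebra of the standard positive definite quadratic form on `ℝⁿ`. -/
noncomputable abbrev Cl (n : ℕ) : Type :=
  CliffordAlgebra (QuadraticMap.weightedSumSquares ℝ (fun _ : Fin n => (1 : ℝ)))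

/-- The orthonormal generators `e i` of `Cl n`, satisfying `e i ^ 2 = 1`, `e i * e j = - e j * e i`. -/
noncomputable def e (n : ℕ) (i : Fin n) : Cl n :=
  CliffordAlgebra.ι _ (Pi.single i 1)

/-- `S = e 1 + ⋯ + e n`. -/
noncomputable def S (n : ℕ) : Cl n := ∑ i, e n i


lemma S_eq (n : ℕ) : S n = CliffordAlgebra.ι _ (fun _ => (1:ℝ)) := by
  rw [S]
  simp only [e]
  rw [← map_sum]
  congr 1
  ext j
  simp [Finset.sum_pi_single]

lemma S_sq (n : ℕ) : S n * S n = algebraMap ℝ (Cl n) (n : ℝ) := by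
  rw [S_eq, CliffordAlgebra.ι_sq_scalar]
  congr 1
  simp [QuadraticMap.weightedSumSquares_apply]

lemma key (n : ℕ) (x : Cl n) : x * S n * S n = ((Real.sqrt n * Real.sqrt n) • x) := by
  rw [mul_assoc, S_sq, Real.mul_self_sqrt (Nat.cast_nonneg n), ← Algebra.commutes,
    ← Algebra.smul_def]

/-- For `n ≥ 1`, `Cl n` is the (internal) direct sum of the `√n`- and `(-√n)`-eigenspaces of
right multiplication by `S`, and these eigenspaces are the principal left ideals
`Cl(n)(√n + S)` and `Cl(n)(-√n + S)` (ranges of right multiplication by `α₊`, `α₋`). -/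
theorem eigenspace_decomposition (n : ℕ) (hn : 1 ≤ n) :
    IsCompl
      (LinearMap.ker (LinearMap.mulRight ℝ (S n) - Real.sqrt n • LinearMap.id))
      (LinearMap.ker (LinearMap.mulRight ℝ (S n) + Real.sqrt n • LinearMap.id)) ∧
    LinearMap.ker (LinearMap.mulRight ℝ (S n) - Real.sqrt n • LinearMap.id)
      = LinearMap.range (LinearMap.mulRight ℝ (Real.sqrt n • (1 : Cl n) + S n)) ∧
    LinearMap.ker (LinearMap.mulRight ℝ (S n) + Real.sqrt n • LinearMap.id)
      = LinearMap.range (LinearMap.mulRight ℝ (-(Real.sqrt n) • (1 : Cl n) + S n)) := by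
  set s := Real.sqrt n with hsdef
  have hs : (0:ℝ) < s := Real.sqrt_pos.mpr (by exact_mod_cast Nat.pos_of_ne_zero (by omega))
  have hs0 : s ≠ 0 := ne_of_gt hs
  have h2s : (2*s) ≠ 0 := by positivity
  have memP : ∀ x : Cl n,
      x ∈ LinearMap.ker (LinearMap.mulRight ℝ (S n) - s • LinearMap.id) ↔ x * S n = s • x := by
    intro x
    simp [LinearMap.mem_ker, sub_eq_zero]
  have memM : ∀ x : Cl n,
      x ∈ LinearMap.ker (LinearMap.mulRight ℝ (S n) + s • LinearMap.id) ↔ x * S n = -(s • x) := by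
    intro x
    simp [LinearMap.mem_ker, add_eq_zero_iff_eq_neg]
  refine ⟨⟨?_, ?_⟩, ?_, ?_⟩
  · -- disjoint
    rw [Submodule.disjoint_def]
    intro x hx1 hx2
    rw [memP] at hx1; rw [memM] at hx2
    have h' : s • x + s • x = 0 := add_eq_zero_iff_eq_neg.mpr (hx1.symm.trans hx2)
    rw [← add_smul] at h'
    rcases smul_eq_zero.mp h' with h | h
    · exact absurd h (by positivity)
    · exact h
  · -- codisjoint
    rw [codisjoint_iff, eq_top_iff]
    intro x _
    have hA : (s • x + x * S n) ∈
        LinearMap.ker (LinearMap.mulRight ℝ (S n) - s • LinearMap.id) := by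
      rw [memP, add_mul, smul_mul_assoc, key, ← hsdef, smul_add, smul_smul]
      abel
    have hB : (s • x - x * S n) ∈
        LinearMap.ker (LinearMap.mulRight ℝ (S n) + s • LinearMap.id) := by
      rw [memM, sub_mul, smul_mul_assoc, key, ← hsdef]
      match_scalars <;> ring
    refine Submodule.mem_sup.mpr ⟨(2*s)⁻¹ • (s • x + x * S n), Submodule.smul_mem _ _ hA,
      (2*s)⁻¹ • (s • x - x * S n), Submodule.smul_mem _ _ hB, ?_⟩
    rw [← smul_add]
    have : (s • x + x * S n) + (s • x - x * S n) = (2*s) • x := by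
      rw [two_mul, add_smul]; abel
    rw [this, smul_smul, inv_mul_cancel₀ h2s, one_smul]
  · -- plus eigenspace = range
    apply le_antisymm
    · intro y hy
      rw [memP] at hy
      refine ⟨(2*s)⁻¹ • y, ?_⟩
      rw [LinearMap.mulRight_apply, smul_mul_assoc, mul_add, mul_smul_comm, mul_one, hy,
        ← add_smul, smul_smul]
      have : (2*s)⁻¹ * (s + s) = 1 := by field_simp; ring
      rw [this, one_smul]
    · rintro _ ⟨x, rfl⟩
      rw [LinearMap.mulRight_apply, memP]
      have expand : x * (s • (1:Cl n) + S n) = s • x + x * S n := by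
        rw [mul_add, mul_smul_comm, mul_one]
      rw [expand, add_mul, smul_mul_assoc, key, ← hsdef]
      match_scalars <;> ring
  · -- minus eigenspace = range
    apply le_antisymm
    · intro y hy
      rw [memM] at hy
      refine ⟨(-(2*s))⁻¹ • y, ?_⟩
      have expand : y * (-s • (1:Cl n) + S n) = (-s) • y + y * S n := by
        rw [mul_add, mul_smul_comm, mul_one]
      rw [LinearMap.mulRight_apply, smul_mul_assoc, expand, hy]
      have h1 : (-s) • y + -(s • y) = (-(2*s)) • y := by
        match_scalars; ring
      rw [h1, smul_smul, inv_mul_cancel₀ (by simpa using h2s), one_smul]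
    · rintro _ ⟨x, rfl⟩
      rw [LinearMap.mulRight_apply, memM]
      have expand : x * (-s • (1:Cl n) + S n) = (-s) • x + x * S n := by
        rw [mul_add, mul_smul_comm, mul_one]
      rw [expand, add_mul, smul_mul_assoc, key, ← hsdef]
      match_scalars <;> ring
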